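/- arXiv:2107.11796 — 2 statements merged into one kernel-verified Lean document; each statement's English description precedes it below -/
import Mathlib

section
/- Let (G_i)_{i∈I} be a family of locally compact Hausdorff groups which admits a coproduct in the category of locally compact Hausdorff groups, and for each i let q_i : G_i → Q_i be a quotient map of locally compact Hausdorff groups (a surjective continuous open homomorphism). Then the family (Q_i)_{i∈I} also admits a coproduct in the category of locally compact Hausdorff groups. -/
/-- The family `G` admits a coproduct in the category of locally compact Hausdorff groups. -/
def HasLCHCoproduct {I : Type*} (G : I → Type u)
    [∀ i, Group (G i)] [∀ i, TopologicalSpace (G i)] : Prop :=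
  ∃ (X : Type u) (_ : Group X) (_ : TopologicalSpace X),
    ∃ (_ : IsTopologicalGroup X) (_ : LocallyCompactSpace X) (_ : T2Space X)
      (ι : ∀ i, G i →* X),
      (∀ i, Continuous (ι i)) ∧
      ∀ (H : Type u) [Group H] [TopologicalSpace H] [IsTopologicalGroup H]
        [LocallyCompactSpace H] [T2Space H] (f : ∀ i, G i →* H),
        (∀ i, Continuous (f i)) → ∃! F : X →* H, Continuous F ∧ ∀ i, F.comp (ι i) = f i

/-- If a family of locally compact Hausdorff groups admits a coproduct in the category of
locally compact Hausdorff groups, then so does any family of quotients. -/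
theorem hasLCHCoproduct_of_quotients {I : Type*} (G Q : I → Type u)
    [∀ i, Group (G i)] [∀ i, TopologicalSpace (G i)] [∀ i, IsTopologicalGroup (G i)]
    [∀ i, LocallyCompactSpace (G i)] [∀ i, T2Space (G i)]
    [∀ i, Group (Q i)] [∀ i, TopologicalSpace (Q i)] [∀ i, IsTopologicalGroup (Q i)]
    [∀ i, LocallyCompactSpace (Q i)] [∀ i, T2Space (Q i)]
    (q : ∀ i, G i →* Q i)
    (hqc : ∀ i, Continuous (q i)) (hqs : ∀ i, Function.Surjective (q i))
    (hqo : ∀ i, IsOpenMap (q i))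
    (h : HasLCHCoproduct G) :
    HasLCHCoproduct Q := by
  obtain ⟨X, _, _, _, _, _, ι, hιc, hup⟩ := h
  -- the subgroup to quotient by
  set S : Set X := ⋃ i, (ι i) '' ((q i).ker : Set (G i)) with hS
  set N : Subgroup X := (Subgroup.normalClosure S).topologicalClosure with hN
  have hNnormal : N.Normal := Subgroup.is_normal_topologicalClosure _
  have hNclosed : IsClosed (N : Set X) := Subgroup.isClosed_topologicalClosure _
  -- the quotient
  let Y := X ⧸ N
  have : T2Space Y := inferInstance
  have : LocallyCompactSpace Y := inferInstance
  -- maps ι' i : Q i →* Y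
  let φ : ∀ i, G i →* Y := fun i => (QuotientGroup.mk' N).comp (ι i)
  have hker : ∀ i, (q i).ker ≤ (φ i).ker := by
    intro i g hg
    have : (ι i) g ∈ N := by
      refine Subgroup.le_topologicalClosure _ ?_
      exact Subgroup.subset_normalClosure (Set.mem_iUnion.2 ⟨i, ⟨g, hg, rfl⟩⟩)
    show (QuotientGroup.mk' N) ((ι i) g) = 1
    exact (QuotientGroup.eq_one_iff _).2 this
  let e : ∀ i, (G i ⧸ (q i).ker) ≃* Q i := fun i =>
    QuotientGroup.quotientKerEquivOfSurjective (q i) (hqs i)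
  let ι' : ∀ i, Q i →* Y := fun i =>
    (QuotientGroup.lift _ (φ i) (hker i)).comp (e i).symm.toMonoidHom
  have hι'q : ∀ i (g : G i), ι' i (q i g) = φ i g := by
    intro i g
    have : (e i).symm (q i g) = QuotientGroup.mk g := by
      apply (e i).injective; simp [e]
      rfl
    simp [ι', this]
  have hι'c : ∀ i, Continuous (ι' i) := by
    intro i
    rw [((hqo i).isQuotientMap (hqc i) (hqs i)).continuous_iff]
    have : (ι' i) ∘ (q i) = φ i := funext fun g => hι'q i g
    rw [this]
    exact continuous_quot_mk.comp (hιc i)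
  refine ⟨Y, inferInstance, inferInstance, inferInstance, inferInstance, inferInstance,
    ι', hι'c, ?_⟩
  intro H _ _ _ _ _ f hf
  obtain ⟨F, ⟨hFc, hFcomp⟩, hFuniq⟩ := hup H (fun i => (f i).comp (q i))
    (fun i => (hf i).comp (hqc i))
  have hNle : N ≤ F.ker := by
    refine Subgroup.topologicalClosure_minimal _ (Subgroup.normalClosure_le_normal ?_)
      (isClosed_singleton.preimage hFc)
    rintro x hx
    obtain ⟨i, g, hg, rfl⟩ := by simpa [S] using hx
    have := congrArg (fun m => m g) (hFcomp i)
    simp only [MonoidHom.comp_apply] at this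
    simp [MonoidHom.mem_ker, this, hg]
  refine ⟨QuotientGroup.lift N F hNle, ⟨?_, ?_⟩, ?_⟩
  · rw [(QuotientGroup.isQuotientMap_mk N).continuous_iff]
    exact hFc
  · intro i
    ext x
    obtain ⟨g, rfl⟩ := hqs i x
    have := congrArg (fun m => m g) (hFcomp i)
    simp [hι'q i g, φ] at this ⊢
    exact this
  · rintro F' ⟨hF'c, hF'comp⟩
    have hcomp : ∀ i, (F'.comp (QuotientGroup.mk' N)).comp (ι i) = (f i).comp (q i) := by
      intro i
      ext g
      have := congrArg (fun m => m (q i g)) (hF'comp i)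
      simp [hι'q i g, φ] at this ⊢
      exact this
    have huniq := hFuniq (F'.comp (QuotientGroup.mk' N)) ⟨hF'c.comp continuous_quot_mk, hcomp⟩
    ext x
    have := congrArg (fun m => m x) huniq
    simp at this ⊢
    exact this
end

section
/- Let G be an almost-connected locally compact Hausdorff group, L a locally compact Hausdorff group, and φ : G → L a continuous homomorphism. Then the image φ(G₀) of the identity component G₀ of G is dense in the identity component of the closure of φ(G) in L; equivalently, the identity component of the closed subgroup generated by φ(G) is contained in the closure of φ(G₀). -/
/-- A topological group is *almost-connected* if the quotient by the identity
connected component is compact. -/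
def AlmostConnected (G : Type*) [Group G] [TopologicalSpace G] [IsTopologicalGroup G] : Prop :=
  CompactSpace (G ⧸ Subgroup.connectedComponentOfOne G)

section aux

variable {G : Type*} [Group G] [TopologicalSpace G] [IsTopologicalGroup G]

lemma connectedComponent_eq_of_div_mem {a b : G}
    (h : a⁻¹ * b ∈ connectedComponent (1 : G)) :
    connectedComponent a = connectedComponent b := by
  have hb : b ∈ connectedComponent a := by
    have h2 := Continuous.image_connectedComponent_subset (continuous_mul_left a) (1 : G)
    rw [mul_one] at h2
    exact h2 ⟨a⁻¹ * b, h, by group⟩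
  exact connectedComponent_eq hb

/-- The quotient of a topological group by the identity component is totally disconnected. -/
lemma totallyDisconnected_quotient_connectedComponentOfOne :
    TotallyDisconnectedSpace (G ⧸ Subgroup.connectedComponentOfOne G) := by
  set N := Subgroup.connectedComponentOfOne G
  let f : G ⧸ N → ConnectedComponents G := fun q =>
    Quotient.liftOn' q ConnectedComponents.mk (fun a b hab => by
      rw [QuotientGroup.leftRel_apply] at hab
      exact ConnectedComponents.coe_eq_coe.2 (connectedComponent_eq_of_div_mem hab))
  have hcont : Continuous f := by
    rw [(QuotientGroup.isQuotientMap_mk N).continuous_iff]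
    exact ConnectedComponents.continuous_coe
  have hinj : Function.Injective f := by
    intro a b hab
    induction a using QuotientGroup.induction_on with | H a =>
    induction b using QuotientGroup.induction_on with | H b =>
    have hab' : ConnectedComponents.mk a = ConnectedComponents.mk b := hab
    have hcc : connectedComponent a = connectedComponent b :=
      ConnectedComponents.coe_eq_coe.1 hab'
    have hb : b ∈ connectedComponent a := hcc.symm ▸ mem_connectedComponent
    have hmem : a⁻¹ * b ∈ connectedComponent (1 : G) := by
      have h2 := Continuous.image_connectedComponent_subset (continuous_mul_left a⁻¹) a
      rw [inv_mul_cancel] at h2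
      exact h2 ⟨b, hb, rfl⟩
    exact (QuotientGroup.eq (s := N)).2 hmem
  constructor
  intro t _ ht x hx y hy
  apply hinj
  exact isTotallyDisconnected_of_totallyDisconnectedSpace (f '' t) (f '' t) subset_rfl
      (ht.image f hcont.continuousOn) ⟨x, hx, rfl⟩ ⟨y, hy, rfl⟩

/-- The identity component is a normal subgroup. -/
lemma connectedComponentOfOne_normal : (Subgroup.connectedComponentOfOne G).Normal := by
  constructor
  intro n hn g
  have h2 := Continuous.image_connectedComponent_subset
    (IsTopologicalGroup.continuous_conj g) (1 : G)
  rw [mul_one, mul_inv_cancel] at h2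
  exact h2 ⟨n, hn, rfl⟩

end aux

/-- For a continuous homomorphism `φ` from an almost-connected locally compact Hausdorff group
`G` to a locally compact Hausdorff group `L`, the identity component of the closure of `φ(G)`
(the closed subgroup generated by `φ(G)`) is contained in the closure of the image `φ(G₀)` of
the identity component of `G`; that is, `φ(G₀)` is dense in that identity component. -/
theorem image_identityComponent_dense {G L : Type*}
    [Group G] [TopologicalSpace G] [IsTopologicalGroup G] [LocallyCompactSpace G] [T2Space G]
    [Group L] [TopologicalSpace L] [IsTopologicalGroup L] [LocallyCompactSpace L] [T2Space L]
    (hG : AlmostConnected G) (φ : G →* L) (hφ : Continuous φ) :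
    Subtype.val '' connectedComponent (1 : φ.range.topologicalClosure) ⊆
      closure (φ '' connectedComponent (1 : G)) := by
  classical
  set H : Subgroup L := φ.range.topologicalClosure with hH
  -- the corestriction of φ to H
  let ψ : G →* H := φ.codRestrict H (fun g => subset_closure ⟨g, rfl⟩)
  have hψcont : Continuous (ψ : G → H) := Continuous.subtype_mk hφ _
  have hval : Subtype.val ∘ (ψ : G → H) = φ := rfl
  have hrange : Subtype.val '' Set.range (ψ : G → H) = (φ.range : Set L) := by
    rw [← Set.range_comp, hval]; rfl
  have hψdense : DenseRange (ψ : G → H) := by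
    intro x
    rw [closure_subtype, hrange]
    exact x.2
  -- G₀ and its closure in H
  set G₀ : Subgroup G := Subgroup.connectedComponentOfOne G
  haveI : G₀.Normal := connectedComponentOfOne_normal
  set N : Subgroup H := (G₀.map ψ).topologicalClosure with hN
  have hNclosed : IsClosed (N : Set H) := Subgroup.isClosed_topologicalClosure _
  -- conjugation by elements of the range of ψ preserves N
  have hconj_range : ∀ g : G, ∀ n ∈ N, ψ g * n * (ψ g)⁻¹ ∈ N := by
    intro g n hn
    have hcont : Continuous fun x : H => ψ g * x * (ψ g)⁻¹ := by continuity
    have hmaps : Set.MapsTo (fun x : H => ψ g * x * (ψ g)⁻¹)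
        (G₀.map ψ : Set H) (G₀.map ψ : Set H) := by
      rintro _ ⟨a, ha, rfl⟩
      refine ⟨g * a * g⁻¹, ?_, by simp [map_mul]⟩
      have h2 := Continuous.image_connectedComponent_subset
        (IsTopologicalGroup.continuous_conj g) (1 : G)
      rw [mul_one, mul_inv_cancel] at h2
      exact h2 ⟨a, ha, rfl⟩
    have hres : (fun x : H => ψ g * x * (ψ g)⁻¹) n ∈ closure ((G₀.map ψ : Set H)) :=
      map_mem_closure (f := fun x : H => ψ g * x * (ψ g)⁻¹) hcont hn hmaps
    exact hres
  have hNnormal : N.Normal := by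
    constructor
    intro n hn h
    -- the set of h for which conjugation keeps n in N is closed and contains a dense set
    have hS : IsClosed {h : H | h * n * h⁻¹ ∈ N} := by
      have : Continuous fun h : H => h * n * h⁻¹ := by continuity
      exact hNclosed.preimage this
    have hsub : Set.range (ψ : G → H) ⊆ {h : H | h * n * h⁻¹ ∈ N} := by
      rintro _ ⟨g, rfl⟩
      exact hconj_range g n hn
    have : (Set.univ : Set H) ⊆ {h : H | h * n * h⁻¹ ∈ N} := by
      rw [← hS.closure_eq]
      intro x _
      exact closure_mono hsub (hψdense x)
    exact this (Set.mem_univ h)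
  haveI := hNnormal
  haveI : IsClosed (N : Set H) := hNclosed
  -- the quotient Q = H / N
  set Q := H ⧸ N
  have hπcont : Continuous (QuotientGroup.mk' N : H → Q) := continuous_quotient_mk'
  -- the induced map from G/G₀ to Q
  have hker : G₀ ≤ ((QuotientGroup.mk' N).comp ψ).ker := by
    intro g hg
    rw [MonoidHom.mem_ker, MonoidHom.comp_apply]
    rw [QuotientGroup.mk'_apply, QuotientGroup.eq_one_iff]
    exact Subgroup.le_topologicalClosure _ ⟨g, hg, rfl⟩
  set f : G ⧸ G₀ →* Q := QuotientGroup.lift G₀ ((QuotientGroup.mk' N).comp ψ) hker with hf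
  have hfcont : Continuous f := by
    rw [(QuotientGroup.isQuotientMap_mk G₀).continuous_iff]
    exact hπcont.comp hψcont
  -- f has dense range
  have hfdense : DenseRange (f : G ⧸ G₀ → Q) := by
    have hπsurj : Function.Surjective (QuotientGroup.mk' N : H → Q) :=
      QuotientGroup.mk'_surjective N
    have hπdense : DenseRange ((QuotientGroup.mk' N : H → Q)) :=
      Function.Surjective.denseRange hπsurj
    have h1 : DenseRange ((QuotientGroup.mk' N : H → Q) ∘ (ψ : G → H)) :=
      DenseRange.comp hπdense hψdense hπcont
    have h2 : Set.range ((QuotientGroup.mk' N : H → Q) ∘ (ψ : G → H)) ⊆ Set.range f := by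
      rintro _ ⟨g, rfl⟩
      exact ⟨QuotientGroup.mk g, rfl⟩
    exact Dense.mono h2 h1
  -- compactness and surjectivity of f
  haveI : CompactSpace (G ⧸ G₀) := hG
  haveI : T3Space Q := QuotientGroup.instT3Space N
  have hfrange_compact : IsCompact (Set.range f) := isCompact_range hfcont
  have hfsurj : Function.Surjective f := by
    intro q
    have : Set.range f = Set.univ := by
      have := hfrange_compact.isClosed.closure_eq
      rw [← this]
      exact Set.eq_univ_of_forall fun x => hfdense x
    exact (Set.eq_univ_iff_forall.1 this q)
  haveI : CompactSpace Q := by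
    constructor
    rw [← Set.range_eq_univ.2 hfsurj]
    exact hfrange_compact
  -- G/G₀ is a profinite group
  haveI : IsClosed (G₀ : Set G) := isClosed_connectedComponent
  haveI : T3Space (G ⧸ G₀) := QuotientGroup.instT3Space G₀
  haveI : TotallyDisconnectedSpace (G ⧸ G₀) :=
    totallyDisconnected_quotient_connectedComponentOfOne
  -- Q is totally disconnected at 1
  have hQ : connectedComponent (1 : Q) = {1} := by
    refine Set.eq_singleton_iff_unique_mem.2 ⟨mem_connectedComponent, ?_⟩
    intro q hq
    by_contra hq1
    -- find a clopen neighborhood of 1 in G/G₀ inside f⁻¹({q}ᶜ)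
    have hW : IsOpen ({q}ᶜ : Set Q) := isOpen_compl_singleton
    have hU : IsOpen (f ⁻¹' {q}ᶜ) := hW.preimage hfcont
    have h1U : (1 : G ⧸ G₀) ∈ f ⁻¹' {q}ᶜ := by
      simp only [Set.mem_preimage, map_one, Set.mem_compl_iff, Set.mem_singleton_iff]
      exact fun h => hq1 h.symm
    obtain ⟨V, hVclopen, h1V, hVU⟩ := compact_exists_isClopen_in_isOpen hU h1U
    obtain ⟨M, hM⟩ :=
      IsTopologicalGroup.exist_openNormalSubgroup_sub_clopen_nhds_of_one hVclopen h1V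
    -- the image of M in Q is a clopen subgroup avoiding q
    set Msub : Subgroup (G ⧸ G₀) := M.toOpenSubgroup.toSubgroup with hMsub
    haveI : Msub.FiniteIndex := Subgroup.finiteIndex_of_finite_quotient (H := Msub)
    set M' : Subgroup Q := Msub.map f with hM'
    have hM'compact : IsCompact (M' : Set Q) := by
      have hc : IsCompact ((Msub : Set (G ⧸ G₀))) :=
        M.toOpenSubgroup.isClosed.isCompact
      exact hc.image hfcont
    haveI : M'.FiniteIndex := by
      refine ⟨fun h0 => ?_⟩
      have hdvd : M'.index ∣ Msub.index := Msub.index_map_dvd hfsurj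
      rw [h0, zero_dvd_iff] at hdvd
      exact Subgroup.FiniteIndex.index_ne_zero hdvd
    have hM'open : IsOpen (M' : Set Q) :=
      Subgroup.isOpen_of_isClosed_of_finiteIndex M' hM'compact.isClosed
    have hM'clopen : IsClopen (M' : Set Q) := ⟨hM'compact.isClosed, hM'open⟩
    have hsub : connectedComponent (1 : Q) ⊆ (M' : Set Q) :=
      hM'clopen.connectedComponent_subset M'.one_mem
    have hqM' : q ∈ (M' : Set Q) := hsub hq
    obtain ⟨m, hm, hmq⟩ := hqM'
    have : f m ∈ ({q}ᶜ : Set Q) := hVU (hM hm)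
    exact this hmq
  -- conclude
  rintro x ⟨y, hy, rfl⟩
  have h1 : (QuotientGroup.mk' N) y ∈ connectedComponent (1 : Q) := by
    have h2 := Continuous.image_connectedComponent_subset hπcont (1 : H)
    rw [map_one] at h2
    exact h2 ⟨y, hy, rfl⟩
  rw [hQ, Set.mem_singleton_iff] at h1
  have hyN : y ∈ N := by
    rwa [QuotientGroup.mk'_apply, QuotientGroup.eq_one_iff] at h1
  have hyc : y ∈ closure ((G₀.map ψ : Set H)) := hyN
  rw [closure_subtype] at hyc
  have himg : Subtype.val '' (G₀.map ψ : Set H) = φ '' connectedComponent (1 : G) := by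
    ext z
    constructor
    · rintro ⟨_, ⟨a, ha, rfl⟩, rfl⟩
      exact ⟨a, ha, rfl⟩
    · rintro ⟨a, ha, rfl⟩
      exact ⟨ψ a, ⟨a, ha, rfl⟩, rfl⟩
  rwa [himg] at hyc
end
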